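/- arXiv:2312.15539 — 2 statements merged into one kernel-verified Lean document; each statement's English description precedes it below -/
import Mathlib

section
/- Let Φ be an N-function such that both Φ and its complementary function Φ* satisfy the Δ₂-condition. Then the following shifted Young inequality holds: for every ε > 0 there exists a constant C_ε > 0, depending only on ε and the Δ₂-constants of Φ and Φ*, such that for all a, s, t ≥ 0: Φ_a'(t)·s ≤ ε Φ_a(t) + C_ε Φ_a(s), where Φ_a'(r) = (r/(a+r)) Φ'(a+r) is the derivative of the shifted N-function. -/
open MeasureTheory

/-- An N-function `Φ` with derivative `Φ'`: differentiable on `[0,∞)` with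
`Φ(0) = 0`, `Φ(t) = ∫₀ᵗ Φ'(s) ds`, `Φ'` nondecreasing, right-continuous,
`Φ'(0) = 0` and `Φ'(t) > 0` for `t > 0`. -/
structure IsNFunction (Φ Φ' : ℝ → ℝ) : Prop where
  map_zero : Φ 0 = 0
  eq_integral : ∀ t : ℝ, 0 ≤ t → Φ t = ∫ s in (0:ℝ)..t, Φ' s
  deriv_zero : Φ' 0 = 0
  deriv_pos : ∀ t : ℝ, 0 < t → 0 < Φ' t
  deriv_mono : MonotoneOn Φ' (Set.Ici 0)
  deriv_rightCont : ∀ t : ℝ, 0 ≤ t → ContinuousWithinAt Φ' (Set.Ici t) t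

/-- The Δ₂-condition with constant `D`. -/
def Delta2 (Φ : ℝ → ℝ) (D : ℝ) : Prop := ∀ t : ℝ, 0 < t → Φ (2 * t) ≤ D * Φ t

/-- Derivative of the shifted N-function: `Φ_a'(t) = (t/(a+t)) Φ'(a+t)`. -/
noncomputable def shiftDeriv (Φ' : ℝ → ℝ) (a t : ℝ) : ℝ := t / (a + t) * Φ' (a + t)

/-- The shifted N-function `Φ_a(t) = ∫₀ᵗ (s/(a+s)) Φ'(a+s) ds`. -/
noncomputable def shiftN (Φ' : ℝ → ℝ) (a t : ℝ) : ℝ := ∫ s in (0:ℝ)..t, shiftDeriv Φ' a s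

/-- The (generalized) inverse `(Φ')⁻¹(t) = sup {s ≥ 0 : Φ'(s) ≤ t}`. -/
noncomputable def invDeriv (Φ' : ℝ → ℝ) (t : ℝ) : ℝ := sSup {s : ℝ | 0 ≤ s ∧ Φ' s ≤ t}

/-- The complementary N-function `Φ*(t) = ∫₀ᵗ (Φ')⁻¹(s) ds`. -/
noncomputable def complementary (Φ' : ℝ → ℝ) (t : ℝ) : ℝ := ∫ s in (0:ℝ)..t, invDeriv Φ' s

/-! The Δ₂-condition of `Φ` transfers to the shifted functions uniformly in `a`:
`Φ_a(t) ≤ t Φ_a'(t) ≤ Φ_a(2t)` for any convex primitive, and `Φ'(4r) ≤ (D³/4) Φ'(r)` gives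
`Φ_a(2t) ≤ 4D³ Φ_a(t)`. With `δ = ε/(4D³)`, if `s ≤ δt` the term `Φ_a'(t) s ≤ δ Φ_a(2t)` is
absorbed by `ε Φ_a(t)`; otherwise `t < s/δ`, and monotonicity of `Φ_a'` together with
`⌈log₂(2/δ)⌉` doublings bounds `Φ_a'(t) s` by a multiple of `Φ_a(s)`. -/

open Set intervalIntegral

theorem Delta2.apply_two_mul_le {G : ℝ → ℝ} {K : ℝ} (hΔ : Delta2 G K) (h0 : G 0 = 0) {t : ℝ}
    (ht : 0 ≤ t) : G (2 * t) ≤ K * G t := by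
  rcases ht.eq_or_lt with rfl | ht
  · simp [h0]
  · exact hΔ t ht

theorem Delta2.apply_two_pow_mul_le {G : ℝ → ℝ} {K : ℝ} (hΔ : Delta2 G K) (h0 : G 0 = 0)
    (hK : 0 ≤ K) {t : ℝ} (ht : 0 ≤ t) (m : ℕ) : G (2 ^ m * t) ≤ K ^ m * G t := by
  induction m with
  | zero => simp
  | succ m ih =>
    calc G (2 ^ (m + 1) * t) = G (2 * (2 ^ m * t)) := by ring_nf
      _ ≤ K * G (2 ^ m * t) := hΔ.apply_two_mul_le h0 (by positivity)
      _ ≤ K * (K ^ m * G t) := mul_le_mul_of_nonneg_left ih hK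
      _ = K ^ (m + 1) * G t := by ring

namespace MonotoneOn

variable {g : ℝ → ℝ}

theorem nonneg_of_nonneg_zero (hg : MonotoneOn g (Ici 0)) (hg0 : 0 ≤ g 0) {t : ℝ}
    (ht : 0 ≤ t) : 0 ≤ g t :=
  hg0.trans (hg (mem_Ici.2 le_rfl) ht ht)

theorem intervalIntegrable_of_nonneg (hg : MonotoneOn g (Ici 0)) {u v : ℝ} (hu : 0 ≤ u)
    (hv : 0 ≤ v) : IntervalIntegrable g volume u v :=
  (hg.mono fun _ hx => (le_min hu hv).trans hx.1).intervalIntegrable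

theorem integral_nonneg (hg : MonotoneOn g (Ici 0)) (hg0 : 0 ≤ g 0) {t : ℝ} (ht : 0 ≤ t) :
    0 ≤ ∫ x in (0:ℝ)..t, g x :=
  intervalIntegral.integral_nonneg ht fun _ hx => hg.nonneg_of_nonneg_zero hg0 hx.1

theorem monotoneOn_integral (hg : MonotoneOn g (Ici 0)) (hg0 : 0 ≤ g 0) :
    MonotoneOn (fun t => ∫ x in (0:ℝ)..t, g x) (Ici 0) := fun _ hu _ hv huv =>
  integral_mono_interval le_rfl hu huv
    ((ae_restrict_iff' measurableSet_Ioc).2 <|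
      ae_of_all _ fun _ hx => hg.nonneg_of_nonneg_zero hg0 hx.1.le)
    (hg.intervalIntegrable_of_nonneg le_rfl hv)

theorem integral_le_mul (hg : MonotoneOn g (Ici 0)) {t : ℝ} (ht : 0 ≤ t) :
    ∫ x in (0:ℝ)..t, g x ≤ t * g t :=
  calc ∫ x in (0:ℝ)..t, g x ≤ ∫ _ in (0:ℝ)..t, g t :=
        integral_mono_on ht (hg.intervalIntegrable_of_nonneg le_rfl ht) intervalIntegrable_const
          fun _ hx => hg hx.1 ht hx.2
    _ = t * g t := by simp

theorem mul_le_integral_two_mul (hg : MonotoneOn g (Ici 0)) (hg0 : 0 ≤ g 0) {t : ℝ}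
    (ht : 0 ≤ t) : t * g t ≤ ∫ x in (0:ℝ)..2 * t, g x := by
  have h2t : 0 ≤ 2 * t := by positivity
  have hlower : t * g t ≤ ∫ x in t..2 * t, g x :=
    calc t * g t = ∫ _ in t..2 * t, g t := by rw [intervalIntegral.integral_const, smul_eq_mul]; ring
      _ ≤ ∫ x in t..2 * t, g x :=
        integral_mono_on (by linarith) intervalIntegrable_const
          (hg.intervalIntegrable_of_nonneg ht h2t) fun _ hx => hg ht (ht.trans hx.1) hx.1
  rw [← integral_add_adjacent_intervals (hg.intervalIntegrable_of_nonneg le_rfl ht)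
    (hg.intervalIntegrable_of_nonneg ht h2t)]
  linarith [hg.integral_nonneg hg0 ht]

theorem mul_le_of_delta2 (hg : MonotoneOn g (Ici 0)) (hg0 : 0 ≤ g 0) {G : ℝ → ℝ}
    (hG : ∀ t, G t = ∫ x in (0:ℝ)..t, g x) {K : ℝ} (hK : 0 ≤ K) (hΔ : Delta2 G K) {δ : ℝ}
    (hδ : 0 < δ) {m : ℕ} (hm : 2 / δ ≤ 2 ^ m) {s t : ℝ} (hs : 0 ≤ s) (ht : 0 ≤ t) :
    g t * s ≤ δ * K * G t + δ * K ^ m * G s := by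
  have hG0 : G 0 = 0 := by rw [hG, integral_same]
  have hGt : 0 ≤ G t := hG t ▸ hg.integral_nonneg hg0 ht
  have hGs : 0 ≤ G s := hG s ▸ hg.integral_nonneg hg0 hs
  by_cases hst : s ≤ δ * t
  · calc g t * s ≤ δ * (t * g t) := by nlinarith [hg.nonneg_of_nonneg_zero hg0 ht]
      _ ≤ δ * G (2 * t) :=
        mul_le_mul_of_nonneg_left (hG (2 * t) ▸ hg.mul_le_integral_two_mul hg0 ht) hδ.le
      _ ≤ δ * (K * G t) := mul_le_mul_of_nonneg_left (hΔ.apply_two_mul_le hG0 ht) hδ.le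
      _ ≤ δ * K * G t + δ * K ^ m * G s := by
        nlinarith [mul_nonneg (mul_nonneg hδ.le (pow_nonneg hK m)) hGs]
  · have hts : t ≤ s / δ := by rw [le_div_iff₀ hδ]; linarith
    have hsδ : 0 ≤ s / δ := by positivity
    calc g t * s ≤ g (s / δ) * s := mul_le_mul_of_nonneg_right (hg ht hsδ hts) hs
      _ = δ * (s / δ * g (s / δ)) := by field_simp
      _ ≤ δ * G (2 * (s / δ)) :=
        mul_le_mul_of_nonneg_left (hG _ ▸ hg.mul_le_integral_two_mul hg0 hsδ) hδ.le
      _ ≤ δ * G (2 ^ m * s) := by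
        rw [hG, hG]
        refine mul_le_mul_of_nonneg_left
          (hg.monotoneOn_integral hg0 (mem_Ici.2 (by positivity)) (mem_Ici.2 (by positivity)) ?_)
          hδ.le
        calc 2 * (s / δ) = 2 / δ * s := by ring
          _ ≤ 2 ^ m * s := mul_le_mul_of_nonneg_right hm hs
      _ ≤ δ * (K ^ m * G s) := mul_le_mul_of_nonneg_left (hΔ.apply_two_pow_mul_le hG0 hK hs m) hδ.le
      _ ≤ δ * K * G t + δ * K ^ m * G s := by nlinarith [mul_nonneg (mul_nonneg hδ.le hK) hGt]

end MonotoneOn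

namespace IsNFunction

variable {Φ Φ' : ℝ → ℝ}

theorem deriv_nonneg (hN : IsNFunction Φ Φ') {t : ℝ} (ht : 0 ≤ t) : 0 ≤ Φ' t :=
  hN.deriv_mono.nonneg_of_nonneg_zero hN.deriv_zero.ge ht

theorem four_mul_deriv_four_mul_le (hN : IsNFunction Φ Φ') {D : ℝ} (hΔ : Delta2 Φ D)
    (hD : 0 ≤ D) {r : ℝ} (hr : 0 ≤ r) : 4 * Φ' (4 * r) ≤ D ^ 3 * Φ' r := by
  rcases hr.eq_or_lt with rfl | hr
  · simp [hN.deriv_zero]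
  refine le_of_mul_le_mul_left ?_ hr
  calc r * (4 * Φ' (4 * r)) = 4 * r * Φ' (4 * r) := by ring
    _ ≤ ∫ x in (0:ℝ)..2 * (4 * r), Φ' x :=
      hN.deriv_mono.mul_le_integral_two_mul hN.deriv_zero.ge (by positivity)
    _ = Φ (2 ^ 3 * r) := by rw [hN.eq_integral _ (by positivity)]; ring_nf
    _ ≤ D ^ 3 * Φ r := hΔ.apply_two_pow_mul_le hN.map_zero hD hr.le 3
    _ ≤ D ^ 3 * (r * Φ' r) := by
      rw [hN.eq_integral r hr.le]
      exact mul_le_mul_of_nonneg_left (hN.deriv_mono.integral_le_mul hr.le) (by positivity)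
    _ = r * (D ^ 3 * Φ' r) := by ring

theorem monotoneOn_shiftDeriv (hN : IsNFunction Φ Φ') {a : ℝ} (ha : 0 ≤ a) :
    MonotoneOn (shiftDeriv Φ' a) (Ici 0) := by
  intro x hx y hy hxy
  have hy' : 0 ≤ Φ' (a + y) := hN.deriv_nonneg (by linarith [mem_Ici.1 hy])
  rcases (mem_Ici.1 hx).eq_or_lt with rfl | hx
  · simpa [shiftDeriv] using mul_nonneg (div_nonneg (mem_Ici.1 hy) (by linarith)) hy'
  have hfrac : x / (a + x) ≤ y / (a + y) := by
    rw [div_le_div_iff₀ (by linarith) (by linarith)]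
    nlinarith
  exact mul_le_mul hfrac (hN.deriv_mono (by simp; linarith) (by simp; linarith) (by linarith))
    (hN.deriv_nonneg (by linarith)) (div_nonneg (by linarith) (by linarith))

theorem shiftDeriv_two_mul_le (hN : IsNFunction Φ Φ') {D : ℝ} (hΔ : Delta2 Φ D) (hD : 0 ≤ D)
    {a t : ℝ} (ha : 0 ≤ a) (ht : 0 ≤ t) :
    shiftDeriv Φ' a (2 * t) ≤ D ^ 3 * shiftDeriv Φ' a (t / 2) := by
  rcases ht.eq_or_lt with rfl | ht
  · simp [shiftDeriv]
  have hfrac : 2 * t / (a + 2 * t) ≤ 4 * (t / 2 / (a + t / 2)) := by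
    rw [show 4 * (t / 2 / (a + t / 2)) = 2 * t / (a + t / 2) by ring]
    exact div_le_div_of_nonneg_left (by linarith) (by linarith) (by linarith)
  have hderiv : Φ' (a + 2 * t) ≤ Φ' (4 * (a + t / 2)) :=
    hN.deriv_mono (by simp; linarith) (by simp; linarith) (by linarith)
  calc shiftDeriv Φ' a (2 * t) ≤ 4 * (t / 2 / (a + t / 2)) * Φ' (4 * (a + t / 2)) :=
        mul_le_mul hfrac hderiv (hN.deriv_nonneg (by linarith)) (by positivity)
    _ = t / 2 / (a + t / 2) * (4 * Φ' (4 * (a + t / 2))) := by ring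
    _ ≤ t / 2 / (a + t / 2) * (D ^ 3 * Φ' (a + t / 2)) :=
        mul_le_mul_of_nonneg_left (hN.four_mul_deriv_four_mul_le hΔ hD (by positivity))
          (by positivity)
    _ = D ^ 3 * shiftDeriv Φ' a (t / 2) := by unfold shiftDeriv; ring

theorem delta2_shiftN (hN : IsNFunction Φ Φ') {D : ℝ} (hΔ : Delta2 Φ D) (hD : 0 ≤ D) {a : ℝ}
    (ha : 0 ≤ a) : Delta2 (shiftN Φ' a) (4 * D ^ 3) := by
  intro t ht
  have hmono := hN.monotoneOn_shiftDeriv ha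
  have hsd0 : 0 ≤ shiftDeriv Φ' a 0 := by simp [shiftDeriv]
  calc shiftN Φ' a (2 * t) ≤ 2 * t * shiftDeriv Φ' a (2 * t) :=
        hmono.integral_le_mul (by positivity)
    _ ≤ 2 * t * (D ^ 3 * shiftDeriv Φ' a (t / 2)) :=
        mul_le_mul_of_nonneg_left (hN.shiftDeriv_two_mul_le hΔ hD ha ht.le) (by positivity)
    _ = 4 * D ^ 3 * (t / 2 * shiftDeriv Φ' a (t / 2)) := by ring
    _ ≤ 4 * D ^ 3 * shiftN Φ' a (2 * (t / 2)) :=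
        mul_le_mul_of_nonneg_left (hmono.mul_le_integral_two_mul hsd0 (by positivity))
          (by positivity)
    _ = 4 * D ^ 3 * shiftN Φ' a t := by ring_nf

end IsNFunction

theorem statement4_general (D Dstar : ℝ) (hD : 0 < D) :
    ∀ ε : ℝ, 0 < ε →
      ∃ Cε : ℝ, 0 < Cε ∧
        ∀ (Φ Φ' : ℝ → ℝ),
          IsNFunction Φ Φ' →
          Delta2 Φ D →
          Delta2 (complementary Φ') Dstar →
          ∀ a s t : ℝ, 0 ≤ a → 0 ≤ s → 0 ≤ t →
            shiftDeriv Φ' a t * s ≤ ε * shiftN Φ' a t + Cε * shiftN Φ' a s := by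
  intro ε hε
  have hK : 0 < 4 * D ^ 3 := by positivity
  obtain ⟨m, hm⟩ := pow_unbounded_of_one_lt (2 / (ε / (4 * D ^ 3))) one_lt_two
  refine ⟨ε / (4 * D ^ 3) * (4 * D ^ 3) ^ m, by positivity, ?_⟩
  intro Φ Φ' hN hΔ _ a s t ha hs ht
  have hyoung := (hN.monotoneOn_shiftDeriv ha).mul_le_of_delta2 (by simp [shiftDeriv])
    (fun _ => rfl) hK.le (hN.delta2_shiftN hΔ hD.le ha) (div_pos hε hK) hm.le hs ht
  rwa [div_mul_cancel₀ _ hK.ne'] at hyoung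

/-- shifted Young inequality: for every `ε > 0` there is `C_ε > 0`,
depending only on `ε` and the Δ₂-constants of `Φ` and `Φ*`, such that
`Φ_a'(t) s ≤ ε Φ_a(t) + C_ε Φ_a(s)` for all `a, s, t ≥ 0`. -/
theorem statement4 (D Dstar : ℝ) (hD : 0 < D) (hDstar : 0 < Dstar) :
    ∀ ε : ℝ, 0 < ε →
      ∃ Cε : ℝ, 0 < Cε ∧
        ∀ (Φ Φ' : ℝ → ℝ),
          IsNFunction Φ Φ' →
          Delta2 Φ D →
          Delta2 (complementary Φ') Dstar →
          ∀ a s t : ℝ, 0 ≤ a → 0 ≤ s → 0 ≤ t →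
            shiftDeriv Φ' a t * s ≤ ε * shiftN Φ' a t + Cε * shiftN Φ' a s :=
  statement4_general D Dstar hD
end

section
/- (Abstract best-approximation / Céa-type lemma.) Let 0 < c ≤ C and for each i ∈ {1,…,d} let φ_i be an N-function that is C² on (0,∞), satisfies the Δ₂-condition with constant D together with its complementary function φ_i*, is uniformly convex with constants c, C, and let (φ_i, A_i) satisfy the orthotropic growth conditions with constants c, C. Define ψ_i(t) = ∫₀ᵗ √(s φ_i'(s)) ds, V_i(s) = ψ_i'(|s|) s/|s| (V_i(0) = 0), and the coordinatewise maps A, V : ℝ^d → ℝ^d. Let Ω ⊂ ℝ^d be measurable with finite measure, and let G, G_h, G_v : Ω → ℝ^d be measurable vector fields such that ∫_Ω |V(G) − V(G_h)|² dx and ∫_Ω |V(G) − V(G_v)|² dx are finite and the Galerkin orthogonality relation ∫_Ω (A(G(x)) − A(G_h(x))) · (G_h(x) − G_v(x)) dx = 0 holds (all integrals appearing being finite). Then ∫_Ω |V(G) − V(G_h)|² dx ≤ C'' ∫_Ω |V(G) − V(G_v)|² dx, with a constant C'' depending only on c, C, D (not on Ω, G, G_h, G_v). -/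
open MeasureTheory

/-- Uniform convexity with constants `c ≤ C`: `c Φ'(t) ≤ t Φ''(t) ≤ C Φ'(t)` for `t > 0`. -/
def UniformlyConvex (Φ' Φ'' : ℝ → ℝ) (c C : ℝ) : Prop :=
  ∀ t : ℝ, 0 < t → c * Φ' t ≤ t * Φ'' t ∧ t * Φ'' t ≤ C * Φ' t

/-- The orthotropic growth conditions for the pair `(φ, A)` with constants `c ≤ C`
(all terms vanish when `ξ = η`). -/
def OrthotropicGrowth (Φ'' A : ℝ → ℝ) (c C : ℝ) : Prop :=
  ∀ ξ η : ℝ, c * (Φ'' (|ξ| + |η|) * |ξ - η| ^ 2) ≤ (A ξ - A η) * (ξ - η) ∧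
    |A ξ - A η| ≤ C * (Φ'' (|ξ| + |η|) * |ξ - η|)

/-- `ψ'(t) = √(t Φ'(t))`. -/
noncomputable def psiDeriv (Φ' : ℝ → ℝ) (t : ℝ) : ℝ := Real.sqrt (t * Φ' t)

/-- `ψ(t) = ∫₀ᵗ √(s Φ'(s)) ds`. -/
noncomputable def psiOf (Φ' : ℝ → ℝ) (t : ℝ) : ℝ := ∫ s in (0:ℝ)..t, psiDeriv Φ' s

/-- `V(s) = ψ'(|s|) s/|s|` for `s ≠ 0`, `V(0) = 0`. -/
noncomputable def Vof (Φ' : ℝ → ℝ) (s : ℝ) : ℝ :=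
  if s = 0 then 0 else psiDeriv Φ' |s| * s / |s|

/-!
Uniform convexity makes `t ↦ φ'(t) t^(-C)` nonincreasing, so `φ'` changes by a bounded factor
between comparable arguments. From this, coordinatewise,
`|V(ξ) - V(η)|² ≍ φ''(|ξ| + |η|) |ξ - η|²`, and a shifted Young inequality
`φ''(|ξ| + |η|) |ξ - η| |ξ - ν| ≤ ε φ''(|ξ| + |η|) |ξ - η|² + K_ε φ''(|ξ| + |ν|) |ξ - ν|²` holds.
Writing `(A ξ - A η)(ν - η) = (A ξ - A η)(ξ - η) - (A ξ - A η)(ξ - ν)`, the first term is coercive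
by orthotropic growth and the second is absorbed by the Young inequality; this gives
`|V(ξ) - V(η)|² + K₁ (A ξ - A η)(η - ν) ≤ K₂ |V(ξ) - V(ν)|²` pointwise (with `ξ, η, ν` the values of
`G, G_h, G_v`), and the middle term integrates to zero by Galerkin orthogonality.
-/

open Set

lemma Vof_of_nonneg (φ' : ℝ → ℝ) {s : ℝ} (hs : 0 ≤ s) : Vof φ' s = psiDeriv φ' s := by
  rcases hs.eq_or_lt with rfl | hs
  · simp [Vof, psiDeriv]
  · rw [Vof, if_neg hs.ne', abs_of_pos hs]
    field_simp

lemma Vof_neg (φ' : ℝ → ℝ) (s : ℝ) : Vof φ' (-s) = -Vof φ' s := by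
  by_cases hs : s = 0
  · simp [hs, Vof]
  · rw [Vof, Vof, if_neg (neg_ne_zero.mpr hs), if_neg hs, abs_neg]
    ring

structure IsUniformlyConvexDeriv (c C : ℝ) (φ' φ'' : ℝ → ℝ) : Prop where
  c_pos : 0 < c
  c_le : c ≤ C
  pos : ∀ t : ℝ, 0 < t → 0 < φ' t
  monotoneOn : MonotoneOn φ' (Ici 0)
  hasDerivAt : ∀ t : ℝ, 0 < t → HasDerivAt φ' (φ'' t) t
  uniformlyConvex : UniformlyConvex φ' φ'' c C

namespace IsUniformlyConvexDeriv

variable {c C : ℝ} {φ' φ'' : ℝ → ℝ}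

lemma C_pos (h : IsUniformlyConvexDeriv c C φ' φ'') : 0 < C := h.c_pos.trans_le h.c_le

lemma deriv2_pos (h : IsUniformlyConvexDeriv c C φ' φ'') {t : ℝ} (ht : 0 < t) :
    0 < φ'' t :=
  pos_of_mul_pos_right ((mul_pos h.c_pos (h.pos t ht)).trans_le (h.uniformlyConvex t ht).1)
    ht.le

lemma self_mul_apply_nonneg (h : IsUniformlyConvexDeriv c C φ' φ'') {t : ℝ} (ht : 0 ≤ t) :
    0 ≤ t * φ' t := by
  rcases ht.eq_or_lt with rfl | ht
  · simp
  · exact (mul_pos ht (h.pos t ht)).le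

lemma antitoneOn_mul_rpow_neg (h : IsUniformlyConvexDeriv c C φ' φ'') :
    AntitoneOn (fun x => φ' x * x ^ (-C)) (Ioi 0) := by
  have hderiv : ∀ x ∈ Ioi (0 : ℝ), HasDerivAt (fun x => φ' x * x ^ (-C))
      (φ'' x * x ^ (-C) + φ' x * (-C * x ^ (-C - 1))) x := fun x hx =>
    (h.hasDerivAt x hx).mul (Real.hasDerivAt_rpow_const (Or.inl (ne_of_gt hx)))
  refine antitoneOn_of_hasDerivWithinAt_nonpos (convex_Ioi 0)
    (fun x hx => (hderiv x hx).continuousAt.continuousWithinAt)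
    (fun x hx => (hderiv x (interior_subset hx)).hasDerivWithinAt) fun x hx => ?_
  rw [interior_Ioi] at hx
  have hx' : x ^ (-C) = x * x ^ (-C - 1) := by
    rw [mul_comm, ← Real.rpow_add_one hx.ne']; ring_nf
  have hxC : 0 ≤ x ^ (-C - 1) := Real.rpow_nonneg hx.le _
  have : x * φ'' x - C * φ' x ≤ 0 := by linarith [(h.uniformlyConvex x hx).2]
  rw [hx']
  nlinarith [mul_nonpos_of_nonpos_of_nonneg this hxC]

lemma le_rpow_mul_of_le_mul (h : IsUniformlyConvexDeriv c C φ' φ'') {M s t : ℝ} (hM : 1 ≤ M)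
    (hs : 0 ≤ s) (ht : 0 < t) (hst : s ≤ M * t) : φ' s ≤ M ^ C * φ' t := by
  have hM' : 1 ≤ M ^ C := Real.one_le_rpow hM h.C_pos.le
  rcases le_or_gt s t with hle | hlt
  · have := h.monotoneOn hs ht.le hle
    nlinarith [h.pos t ht]
  · have hs' : 0 < s := ht.trans hlt
    have hanti := h.antitoneOn_mul_rpow_neg (mem_Ioi.2 ht) (mem_Ioi.2 hs') hlt.le
    simp only at hanti
    have hratio : (s / t) ^ C ≤ M ^ C :=
      Real.rpow_le_rpow (by positivity) ((div_le_iff₀ ht).2 hst) h.C_pos.le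
    calc φ' s = φ' s * s ^ (-C) * s ^ C := by
          rw [mul_assoc, ← Real.rpow_add hs']; simp
      _ ≤ φ' t * t ^ (-C) * s ^ C := by gcongr
      _ = (s / t) ^ C * φ' t := by
          rw [Real.div_rpow hs'.le ht.le, Real.rpow_neg ht.le]; field_simp
      _ ≤ M ^ C * φ' t := by gcongr; exact (h.pos t ht).le

lemma mul_sub_apply_le (h : IsUniformlyConvexDeriv c C φ' φ'') {x y : ℝ} (hy : 0 ≤ y)
    (hyx : y ≤ x) : y * (φ' x - φ' y) ≤ C * ((x - y) * φ' x) := by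
  rcases hy.eq_or_lt with rfl | hy
  · simpa using mul_nonneg h.C_pos.le (h.self_mul_apply_nonneg hyx)
  rcases hyx.eq_or_lt with rfl | hyx
  · simp
  obtain ⟨s, ⟨hys, hsx⟩, hslope⟩ := exists_hasDerivAt_eq_slope φ' φ'' hyx
    (fun z hz => (h.hasDerivAt z (hy.trans_le hz.1)).continuousAt.continuousWithinAt)
    (fun z hz => h.hasDerivAt z (hy.trans hz.1))
  have hs : 0 < s := hy.trans hys
  have hdiff : φ' x - φ' y = φ'' s * (x - y) := by
    rw [hslope]; field_simp [(sub_pos.2 hyx).ne']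
  have hφs : φ' s ≤ φ' x := h.monotoneOn hs.le (hs.trans hsx).le hsx.le
  have hyφ'' : y * φ'' s ≤ C * φ' x :=
    calc y * φ'' s ≤ s * φ'' s := by gcongr; exact (h.deriv2_pos hs).le
      _ ≤ C * φ' s := (h.uniformlyConvex s hs).2
      _ ≤ C * φ' x := by gcongr; exact h.C_pos.le
  rw [hdiff]
  nlinarith [mul_le_mul_of_nonneg_right hyφ'' (sub_pos.2 hyx).le]

lemma psiDeriv_sq (h : IsUniformlyConvexDeriv c C φ' φ'') {t : ℝ} (ht : 0 ≤ t) :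
    psiDeriv φ' t ^ 2 = t * φ' t :=
  Real.sq_sqrt (h.self_mul_apply_nonneg ht)

lemma psiDeriv_le_psiDeriv (h : IsUniformlyConvexDeriv c C φ' φ'') {x y : ℝ} (hy : 0 ≤ y)
    (hyx : y ≤ x) : psiDeriv φ' y ≤ psiDeriv φ' x := by
  refine Real.sqrt_le_sqrt ?_
  rcases hy.eq_or_lt with rfl | hy'
  · simpa using h.self_mul_apply_nonneg hyx
  · exact mul_le_mul hyx (h.monotoneOn hy (hy.trans hyx) hyx) (h.pos y hy').le (hy.trans hyx)

lemma psiDeriv_sub_sq_bounds (h : IsUniformlyConvexDeriv c C φ' φ'') {x y : ℝ} (hy : 0 ≤ y)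
    (hyx : y ≤ x) (hx : 0 < x) :
    (x - y) ^ 2 * φ' x ≤ 4 * x * (psiDeriv φ' x - psiDeriv φ' y) ^ 2 ∧
      x * (psiDeriv φ' x - psiDeriv φ' y) ^ 2 ≤ (C + 1) ^ 2 * ((x - y) ^ 2 * φ' x) := by
  set F := psiDeriv φ'
  have hφx := h.pos x hx
  have hFx : F x ^ 2 = x * φ' x := h.psiDeriv_sq hx.le
  have hFy : F y ^ 2 = y * φ' y := h.psiDeriv_sq hy
  have hFyx : F y ≤ F x := h.psiDeriv_le_psiDeriv hy hyx
  have hF0 : 0 ≤ F y := Real.sqrt_nonneg _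
  have hdiff : (F x - F y) * (F x + F y) = x * φ' x - y * φ' y := by
    rw [← hFx, ← hFy]; ring
  have hlow : (x - y) * φ' x ≤ x * φ' x - y * φ' y := by
    nlinarith [h.monotoneOn hy hx.le hyx]
  have hup : x * φ' x - y * φ' y ≤ (C + 1) * ((x - y) * φ' x) := by
    nlinarith [h.mul_sub_apply_le hy hyx]
  constructor
  · have : (x - y) * φ' x ≤ 2 * F x * (F x - F y) := by nlinarith
    have := pow_le_pow_left₀ (by nlinarith) this 2
    nlinarith
  · have : F x * (F x - F y) ≤ (C + 1) * ((x - y) * φ' x) := by nlinarith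
    have := pow_le_pow_left₀ (by nlinarith) this 2
    nlinarith

lemma psiDeriv_add_sq_bounds (h : IsUniformlyConvexDeriv c C φ' φ'') {x y : ℝ} (hy : 0 ≤ y)
    (hyx : y ≤ x) (hx : 0 < x) :
    (x + y) ^ 2 * φ' x ≤ 4 * x * (psiDeriv φ' x + psiDeriv φ' y) ^ 2 ∧
      x * (psiDeriv φ' x + psiDeriv φ' y) ^ 2 ≤ 4 * ((x + y) ^ 2 * φ' x) := by
  have hφx := h.pos x hx
  have hFx := h.psiDeriv_sq hx.le
  have hFyx := h.psiDeriv_le_psiDeriv hy hyx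
  have hF0 : 0 ≤ psiDeriv φ' y := Real.sqrt_nonneg _
  have hxy : (x + y) ^ 2 ≤ 4 * x ^ 2 := by nlinarith
  constructor
  · calc (x + y) ^ 2 * φ' x ≤ 4 * x ^ 2 * φ' x := by gcongr
      _ = 4 * x * psiDeriv φ' x ^ 2 := by rw [hFx]; ring
      _ ≤ 4 * x * (psiDeriv φ' x + psiDeriv φ' y) ^ 2 := by gcongr <;> linarith
  · calc x * (psiDeriv φ' x + psiDeriv φ' y) ^ 2 ≤ x * (4 * psiDeriv φ' x ^ 2) := by
          gcongr; nlinarith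
      _ = 4 * (x ^ 2 * φ' x) := by rw [hFx]; ring
      _ ≤ 4 * ((x + y) ^ 2 * φ' x) := by gcongr; nlinarith

lemma Vof_sub_sq_bounds_of_pos_of_abs_le (h : IsUniformlyConvexDeriv c C φ' φ'') {ξ η : ℝ}
    (hξ : 0 < ξ) (hη : |η| ≤ ξ) :
    (ξ - η) ^ 2 * φ' ξ ≤ 4 * ξ * (Vof φ' ξ - Vof φ' η) ^ 2 ∧
      ξ * (Vof φ' ξ - Vof φ' η) ^ 2 ≤ (C + 2) ^ 2 * ((ξ - η) ^ 2 * φ' ξ) := by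
  have hC := h.C_pos
  have hQ : 0 ≤ (ξ - η) ^ 2 * φ' ξ := mul_nonneg (sq_nonneg _) (h.pos ξ hξ).le
  rw [Vof_of_nonneg φ' hξ.le]
  rcases le_or_gt 0 η with hη0 | hη0
  · rw [abs_of_nonneg hη0] at hη
    rw [Vof_of_nonneg φ' hη0]
    obtain ⟨hlow, hup⟩ := h.psiDeriv_sub_sq_bounds hη0 hη hξ
    exact ⟨hlow, hup.trans (by gcongr; linarith)⟩
  · rw [abs_of_neg hη0] at hη
    have hV : Vof φ' η = -psiDeriv φ' (-η) := by
      rw [← Vof_of_nonneg φ' (neg_nonneg.2 hη0.le), Vof_neg, neg_neg]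
    obtain ⟨hlow, hup⟩ := h.psiDeriv_add_sq_bounds (neg_nonneg.2 hη0.le) hη hξ
    rw [← sub_eq_add_neg] at hlow hup
    rw [hV, sub_neg_eq_add]
    exact ⟨hlow, hup.trans (by gcongr; nlinarith)⟩

lemma Vof_sub_sq_comparable_of_pos_of_abs_le (h : IsUniformlyConvexDeriv c C φ' φ'')
    {ξ η : ℝ} (hξ : 0 < ξ) (hη : |η| ≤ ξ) :
    φ'' (|ξ| + |η|) * (ξ - η) ^ 2 ≤ 4 * C * 2 ^ C * (Vof φ' ξ - Vof φ' η) ^ 2 ∧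
      (Vof φ' ξ - Vof φ' η) ^ 2 ≤
        2 * (C + 2) ^ 2 / c * (φ'' (|ξ| + |η|) * (ξ - η) ^ 2) := by
  rw [abs_of_pos hξ]
  set a := ξ + |η|
  have hξa : ξ ≤ a := le_add_of_nonneg_right (abs_nonneg η)
  have ha : 0 < a := hξ.trans_le hξa
  have ha2 : a ≤ 2 * ξ := by linarith
  have hφ''a := h.deriv2_pos ha
  obtain ⟨hca, hCa⟩ := h.uniformlyConvex a ha
  have hφ''_le : ξ * φ'' a ≤ C * 2 ^ C * φ' ξ :=
    calc ξ * φ'' a ≤ a * φ'' a := by gcongr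
      _ ≤ C * φ' a := hCa
      _ ≤ C * (2 ^ C * φ' ξ) := by
          gcongr; exact h.C_pos.le; exact h.le_rpow_mul_of_le_mul one_le_two ha.le hξ ha2
      _ = C * 2 ^ C * φ' ξ := by ring
  have hle_φ'' : c * φ' ξ ≤ 2 * ξ * φ'' a :=
    calc c * φ' ξ ≤ c * φ' a := by gcongr; exacts [h.c_pos.le, h.monotoneOn hξ.le ha.le hξa]
      _ ≤ a * φ'' a := hca
      _ ≤ 2 * ξ * φ'' a := by gcongr
  obtain ⟨hlow, hup⟩ := h.Vof_sub_sq_bounds_of_pos_of_abs_le hξ hη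
  have hc := h.c_pos
  have hC := h.C_pos
  constructor
  · refine le_of_mul_le_mul_left ?_ hξ
    calc ξ * (φ'' a * (ξ - η) ^ 2) = ξ * φ'' a * (ξ - η) ^ 2 := by ring
      _ ≤ C * 2 ^ C * φ' ξ * (ξ - η) ^ 2 := by gcongr
      _ = C * 2 ^ C * ((ξ - η) ^ 2 * φ' ξ) := by ring
      _ ≤ C * 2 ^ C * (4 * ξ * (Vof φ' ξ - Vof φ' η) ^ 2) := by gcongr
      _ = ξ * (4 * C * 2 ^ C * (Vof φ' ξ - Vof φ' η) ^ 2) := by ring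
  · refine le_of_mul_le_mul_left ?_ hξ
    calc ξ * (Vof φ' ξ - Vof φ' η) ^ 2 ≤ (C + 2) ^ 2 * ((ξ - η) ^ 2 * φ' ξ) := hup
      _ = (C + 2) ^ 2 * (ξ - η) ^ 2 / c * (c * φ' ξ) := by field_simp
      _ ≤ (C + 2) ^ 2 * (ξ - η) ^ 2 / c * (2 * ξ * φ'' a) := by gcongr
      _ = ξ * (2 * (C + 2) ^ 2 / c * (φ'' a * (ξ - η) ^ 2)) := by ring

lemma Vof_sub_sq_comparable (h : IsUniformlyConvexDeriv c C φ' φ'') (ξ η : ℝ) :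
    φ'' (|ξ| + |η|) * (ξ - η) ^ 2 ≤ 4 * C * 2 ^ C * (Vof φ' ξ - Vof φ' η) ^ 2 ∧
      (Vof φ' ξ - Vof φ' η) ^ 2 ≤
        2 * (C + 2) ^ 2 / c * (φ'' (|ξ| + |η|) * (ξ - η) ^ 2) := by
  wlog hηξ : |η| ≤ |ξ| generalizing ξ η
  · have := this η ξ (le_of_not_ge hηξ)
    rwa [add_comm, sub_sq_comm η, sub_sq_comm (Vof φ' η)] at this
  wlog hξ : 0 < ξ generalizing ξ η
  · rcases (not_lt.1 hξ).lt_or_eq with hξ | rfl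
    · have := this (-ξ) (-η) (by simpa using hηξ) (by linarith)
      rwa [abs_neg, abs_neg, Vof_neg, Vof_neg, neg_sub_neg, neg_sub_neg, sub_sq_comm η,
        sub_sq_comm (Vof φ' η)] at this
    · obtain rfl : η = 0 := abs_nonpos_iff.1 (by simpa using hηξ)
      simp
  exact h.Vof_sub_sq_comparable_of_pos_of_abs_le hξ (by rwa [abs_of_pos hξ] at hηξ)

lemma deriv2_mul_sq_nonneg (h : IsUniformlyConvexDeriv c C φ' φ'') (ξ η : ℝ) :
    0 ≤ φ'' (|ξ| + |η|) * (ξ - η) ^ 2 := by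
  rcases eq_or_ne ξ η with rfl | hne
  · simp
  · have : 0 < |ξ| + |η| := (abs_pos.2 (sub_ne_zero.2 hne)).trans_le (abs_sub ξ η)
    exact mul_nonneg (h.deriv2_pos this).le (sq_nonneg _)

lemma deriv2_mul_abs_sub_le_of_abs_sub_le (h : IsUniformlyConvexDeriv c C φ' φ'') {M : ℝ}
    (hM : 1 ≤ M) {ξ η ν : ℝ} (hvu : |ξ - η| ≤ M * |ξ - ν|) :
    φ'' (|ξ| + |η|) * |ξ - η| ≤
      C / c * (4 * M) ^ C * (2 * M + 1) * (φ'' (|ξ| + |ν|) * |ξ - ν|) := by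
  have hc := h.c_pos
  have hC := h.C_pos
  have hηv : |η| ≤ |ξ| + |ξ - η| := by
    have := abs_sub_abs_le_abs_sub η ξ; rw [abs_sub_comm] at this; linarith
  have hνu : |ν| ≤ |ξ| + |ξ - ν| := by
    have := abs_sub_abs_le_abs_sub ν ξ; rw [abs_sub_comm] at this; linarith
  set a := |ξ| + |η|
  set b := |ξ| + |ν|
  set v := |ξ - η|
  set u := |ξ - ν|
  have hva : v ≤ a := abs_sub ξ η
  have hub : u ≤ b := abs_sub ξ ν
  have hv : 0 ≤ v := abs_nonneg _
  have hrb : |ξ| ≤ b := le_add_of_nonneg_right (abs_nonneg ν)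
  have hu0 : 0 ≤ u := abs_nonneg _
  rcases hu0.eq_or_lt with hu | hu
  · have : v = 0 := le_antisymm (by simpa [← hu] using hvu) hv
    simp [this, ← hu]
  have hb : 0 < b := hu.trans_le hub
  have hK : 0 ≤ C / c * (4 * M) ^ C * (2 * M + 1) * (φ'' b * u) := by
    have := h.deriv2_pos hb; positivity
  rcases hv.eq_or_lt with hv' | hv'
  · simpa [← hv'] using hK
  have ha : 0 < a := hv'.trans_le hva
  have hab : a ≤ 4 * M * b := by
    nlinarith [mul_le_mul_of_nonneg_left hub (by linarith : (0 : ℝ) ≤ M),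
      mul_le_mul_of_nonneg_right hM hb.le]
  have hra : |ξ| ≤ a := le_add_of_nonneg_right (abs_nonneg η)
  have hvb : v * b ≤ (2 * M + 1) * u * a :=
    calc v * b ≤ v * (2 * |ξ| + u) := by gcongr; linarith
      _ = 2 * |ξ| * v + u * v := by ring
      _ ≤ 2 * a * (M * u) + u * a := by gcongr
      _ = (2 * M + 1) * u * a := by ring
  have hφa : φ' a ≤ (4 * M) ^ C * φ' b := h.le_rpow_mul_of_le_mul (by linarith) ha.le hb hab
  obtain ⟨-, hCa⟩ := h.uniformlyConvex a ha
  obtain ⟨hcb, -⟩ := h.uniformlyConvex b hb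
  refine le_of_mul_le_mul_left ?_ (mul_pos (mul_pos ha hb) hc)
  calc a * b * c * (φ'' a * v) = c * (a * φ'' a) * (v * b) := by ring
    _ ≤ c * (C * φ' a) * ((2 * M + 1) * u * a) := by
        gcongr; exact mul_nonneg hc.le (mul_nonneg hC.le (h.pos a ha).le)
    _ ≤ c * (C * ((4 * M) ^ C * φ' b)) * ((2 * M + 1) * u * a) := by gcongr
    _ = C * (4 * M) ^ C * (2 * M + 1) * u * a * (c * φ' b) := by ring
    _ ≤ C * (4 * M) ^ C * (2 * M + 1) * u * a * (b * φ'' b) := by gcongr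
    _ = a * b * c * (C / c * (4 * M) ^ C * (2 * M + 1) * (φ'' b * u)) := by
        field_simp

lemma deriv2_mul_abs_sub_mul_abs_sub_le (h : IsUniformlyConvexDeriv c C φ' φ'') {ε : ℝ}
    (hε : 0 < ε) (hε1 : ε ≤ 1) (ξ η ν : ℝ) :
    φ'' (|ξ| + |η|) * (|ξ - η| * |ξ - ν|) ≤
      ε * (φ'' (|ξ| + |η|) * (ξ - η) ^ 2) +
        C / c * (4 / ε) ^ C * (2 / ε + 1) * (φ'' (|ξ| + |ν|) * (ξ - ν) ^ 2) := by
  have hη := h.deriv2_mul_sq_nonneg ξ η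
  have hν := h.deriv2_mul_sq_nonneg ξ ν
  rcases le_or_gt |ξ - η| (ε⁻¹ * |ξ - ν|) with hvu | huv
  · have hK := h.deriv2_mul_abs_sub_le_of_abs_sub_le ((one_le_inv₀ hε).2 hε1) hvu
    rw [← div_eq_mul_inv, ← div_eq_mul_inv] at hK
    calc φ'' (|ξ| + |η|) * (|ξ - η| * |ξ - ν|)
          = φ'' (|ξ| + |η|) * |ξ - η| * |ξ - ν| := by ring
      _ ≤ C / c * (4 / ε) ^ C * (2 / ε + 1) * (φ'' (|ξ| + |ν|) * |ξ - ν|) * |ξ - ν| := by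
          gcongr
      _ = C / c * (4 / ε) ^ C * (2 / ε + 1) * (φ'' (|ξ| + |ν|) * (ξ - ν) ^ 2) := by
          rw [← sq_abs (ξ - ν)]; ring
      _ ≤ _ := le_add_of_nonneg_left (mul_nonneg hε.le hη)
  · have hv : 0 < |ξ - η| := lt_of_le_of_lt (by positivity) huv
    have hφ'' : 0 < φ'' (|ξ| + |η|) := h.deriv2_pos (hv.trans_le (abs_sub ξ η))
    have hu : |ξ - ν| ≤ ε * |ξ - η| := by
      rw [inv_mul_lt_iff₀ hε] at huv; exact huv.le
    have hK : 0 ≤ C / c * (4 / ε) ^ C * (2 / ε + 1) := by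
      have := h.c_pos; have := h.C_pos; positivity
    calc φ'' (|ξ| + |η|) * (|ξ - η| * |ξ - ν|)
          ≤ φ'' (|ξ| + |η|) * (|ξ - η| * (ε * |ξ - η|)) := by gcongr
      _ = ε * (φ'' (|ξ| + |η|) * (ξ - η) ^ 2) := by rw [← sq_abs (ξ - η)]; ring
      _ ≤ _ := le_add_of_nonneg_right (mul_nonneg hK hν)

end IsUniformlyConvexDeriv

theorem exists_Vof_sub_sq_add_mul_le {c C : ℝ} (hc : 0 < c) (hcC : c ≤ C) :
    ∃ K₁ K₂ : ℝ, 0 < K₂ ∧ ∀ φ' φ'' A : ℝ → ℝ,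
      IsUniformlyConvexDeriv c C φ' φ'' → OrthotropicGrowth φ'' A c C → ∀ ξ η ν : ℝ,
        (Vof φ' ξ - Vof φ' η) ^ 2 + K₁ * ((A ξ - A η) * (η - ν)) ≤
          K₂ * (Vof φ' ξ - Vof φ' ν) ^ 2 := by
  have hC : 0 < C := hc.trans_le hcC
  set ε := c / (2 * C)
  have hε : 0 < ε := by positivity
  have hε1 : ε ≤ 1 := by rw [div_le_one (by positivity)]; linarith
  set Kε := C / c * (4 / ε) ^ C * (2 / ε + 1)
  set K₀ := 4 * C * 2 ^ C
  set K₁ := 2 * (C + 2) ^ 2 / c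
  refine ⟨2 * K₁ / c, 2 * K₁ / c * (C * Kε * K₀), by positivity, ?_⟩
  intro φ' φ'' A h hA ξ η ν
  obtain ⟨hmono, hlip⟩ := hA ξ η
  rw [sq_abs] at hmono
  set p := φ'' (|ξ| + |η|)
  have hcross : (A ξ - A η) * (ξ - ν) ≤ C * (p * (|ξ - η| * |ξ - ν|)) :=
    calc (A ξ - A η) * (ξ - ν) ≤ |A ξ - A η| * |ξ - ν| := by
          rw [← abs_mul]; exact le_abs_self _
      _ ≤ C * (p * |ξ - η|) * |ξ - ν| := by gcongr
      _ = C * (p * (|ξ - η| * |ξ - ν|)) := by ring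
  have hyoung : p * (|ξ - η| * |ξ - ν|) ≤
      ε * (p * (ξ - η) ^ 2) + Kε * (φ'' (|ξ| + |ν|) * (ξ - ν) ^ 2) :=
    h.deriv2_mul_abs_sub_mul_abs_sub_le hε hε1 ξ η ν
  have hVν : φ'' (|ξ| + |ν|) * (ξ - ν) ^ 2 ≤ K₀ * (Vof φ' ξ - Vof φ' ν) ^ 2 :=
    (h.Vof_sub_sq_comparable ξ ν).1
  have hVη : (Vof φ' ξ - Vof φ' η) ^ 2 ≤ K₁ * (p * (ξ - η) ^ 2) :=
    (h.Vof_sub_sq_comparable ξ η).2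
  have hCε : C * ε = c / 2 := by simp only [ε]; field_simp
  have key : c / 2 * (p * (ξ - η) ^ 2) + (A ξ - A η) * (η - ν) ≤
      C * Kε * K₀ * (Vof φ' ξ - Vof φ' ν) ^ 2 := by
    have hKε : 0 ≤ C * Kε := by positivity
    have hyoung' := mul_le_mul_of_nonneg_left hyoung hC.le
    have hVν' := mul_le_mul_of_nonneg_left hVν hKε
    have hεX : C * (ε * (p * (ξ - η) ^ 2)) = c / 2 * (p * (ξ - η) ^ 2) := by
      rw [← mul_assoc, hCε]
    have hG : (A ξ - A η) * (η - ν) =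
        (A ξ - A η) * (ξ - ν) - (A ξ - A η) * (ξ - η) := by ring
    linarith
  calc (Vof φ' ξ - Vof φ' η) ^ 2 + 2 * K₁ / c * ((A ξ - A η) * (η - ν))
      ≤ K₁ * (p * (ξ - η) ^ 2) + 2 * K₁ / c * ((A ξ - A η) * (η - ν)) := by gcongr
    _ = 2 * K₁ / c * (c / 2 * (p * (ξ - η) ^ 2) + (A ξ - A η) * (η - ν)) := by
        field_simp
    _ ≤ 2 * K₁ / c * (C * Kε * K₀ * (Vof φ' ξ - Vof φ' ν) ^ 2) := by gcongr
    _ = 2 * K₁ / c * (C * Kε * K₀) * (Vof φ' ξ - Vof φ' ν) ^ 2 := by ring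

theorem integral_le_mul_of_add_mul_le {α : Type*} [MeasurableSpace α] {μ : Measure α}
    {f g k : α → ℝ} {K₁ K₂ : ℝ} (hf : Integrable f μ) (hg : Integrable g μ)
    (hk : Integrable k μ) (hle : ∀ x, f x + K₁ * g x ≤ K₂ * k x)
    (hg0 : ∫ x, g x ∂μ = 0) :
    ∫ x, f x ∂μ ≤ K₂ * ∫ x, k x ∂μ := by
  have := integral_mono (f := fun x => f x + K₁ * g x) (hf.add (hg.const_mul K₁))
    (hk.const_mul K₂) hle
  rwa [integral_add hf (hg.const_mul K₁), integral_const_mul, integral_const_mul, hg0, mul_zero,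
    add_zero] at this

theorem statement9_general (c C D : ℝ) (hc : 0 < c) (hcC : c ≤ C) :
    ∃ C'' : ℝ, 0 < C'' ∧
      ∀ (d : ℕ) (φ φ' φ'' A : Fin d → ℝ → ℝ),
        (∀ i, IsNFunction (φ i) (φ' i)) →
        (∀ i, ContDiffOn ℝ 2 (φ i) (Set.Ioi 0)) →
        (∀ i, ∀ t : ℝ, 0 < t → HasDerivAt (φ i) (φ' i t) t) →
        (∀ i, ∀ t : ℝ, 0 < t → HasDerivAt (φ' i) (φ'' i t) t) →
        (∀ i, Delta2 (φ i) D) →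
        (∀ i, Delta2 (complementary (φ' i)) D) →
        (∀ i, UniformlyConvex (φ' i) (φ'' i) c C) →
        (∀ i, Continuous (A i)) → (∀ i, A i 0 = 0) →
        (∀ i, OrthotropicGrowth (φ'' i) (A i) c C) →
        ∀ (Ω : Set (Fin d → ℝ)) (G Gh Gv : (Fin d → ℝ) → (Fin d → ℝ)),
          MeasurableSet Ω → volume Ω < ⊤ →
          Measurable G → Measurable Gh → Measurable Gv →
          IntegrableOn (fun x => ∑ i, (Vof (φ' i) (G x i) - Vof (φ' i) (Gh x i)) ^ 2) Ω →
          IntegrableOn (fun x => ∑ i, (Vof (φ' i) (G x i) - Vof (φ' i) (Gv x i)) ^ 2) Ω →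
          IntegrableOn (fun x => ∑ i, (A i (G x i) - A i (Gh x i)) * (Gh x i - Gv x i)) Ω →
          (∫ x in Ω, ∑ i, (A i (G x i) - A i (Gh x i)) * (Gh x i - Gv x i)) = 0 →
          (∫ x in Ω, ∑ i, (Vof (φ' i) (G x i) - Vof (φ' i) (Gh x i)) ^ 2) ≤
            C'' * ∫ x in Ω, ∑ i, (Vof (φ' i) (G x i) - Vof (φ' i) (Gv x i)) ^ 2 := by
  obtain ⟨K₁, K₂, hK₂, hpoint⟩ := exists_Vof_sub_sq_add_mul_le hc hcC
  refine ⟨K₂, hK₂, ?_⟩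
  intro d φ φ' φ'' A hN _ _ hφ'' _ _ hUC _ _ hA Ω G Gh Gv _ _ _ _ _ hIh hIv hIA hGalerkin
  have hφ' : ∀ i, IsUniformlyConvexDeriv c C (φ' i) (φ'' i) := fun i =>
    ⟨hc, hcC, (hN i).deriv_pos, (hN i).deriv_mono, hφ'' i, hUC i⟩
  refine integral_le_mul_of_add_mul_le (K₁ := K₁) hIh hIA hIv (fun x => ?_) hGalerkin
  calc (∑ i, (Vof (φ' i) (G x i) - Vof (φ' i) (Gh x i)) ^ 2) +
        K₁ * ∑ i, (A i (G x i) - A i (Gh x i)) * (Gh x i - Gv x i)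
      = ∑ i, ((Vof (φ' i) (G x i) - Vof (φ' i) (Gh x i)) ^ 2 +
          K₁ * ((A i (G x i) - A i (Gh x i)) * (Gh x i - Gv x i))) := by
        rw [Finset.mul_sum, Finset.sum_add_distrib]
    _ ≤ ∑ i, K₂ * (Vof (φ' i) (G x i) - Vof (φ' i) (Gv x i)) ^ 2 :=
        Finset.sum_le_sum fun i _ => hpoint _ _ _ (hφ' i) (hA i) _ _ _
    _ = K₂ * ∑ i, (Vof (φ' i) (G x i) - Vof (φ' i) (Gv x i)) ^ 2 :=
        (Finset.mul_sum _ _ _).symm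

/-- abstract best-approximation / Céa-type lemma: under the
orthotropic growth assumptions and Galerkin orthogonality,
`∫_Ω |V(G) − V(G_h)|² ≤ C'' ∫_Ω |V(G) − V(G_v)|²`, with `C''` depending only on
`c, C, D`. -/
theorem statement9 (c C D : ℝ) (hc : 0 < c) (hcC : c ≤ C) (hD : 0 < D) :
    ∃ C'' : ℝ, 0 < C'' ∧
      ∀ (d : ℕ) (φ φ' φ'' A : Fin d → ℝ → ℝ),
        (∀ i, IsNFunction (φ i) (φ' i)) →
        (∀ i, ContDiffOn ℝ 2 (φ i) (Set.Ioi 0)) →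
        (∀ i, ∀ t : ℝ, 0 < t → HasDerivAt (φ i) (φ' i t) t) →
        (∀ i, ∀ t : ℝ, 0 < t → HasDerivAt (φ' i) (φ'' i t) t) →
        (∀ i, Delta2 (φ i) D) →
        (∀ i, Delta2 (complementary (φ' i)) D) →
        (∀ i, UniformlyConvex (φ' i) (φ'' i) c C) →
        (∀ i, Continuous (A i)) → (∀ i, A i 0 = 0) →
        (∀ i, OrthotropicGrowth (φ'' i) (A i) c C) →
        ∀ (Ω : Set (Fin d → ℝ)) (G Gh Gv : (Fin d → ℝ) → (Fin d → ℝ)),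
          MeasurableSet Ω → volume Ω < ⊤ →
          Measurable G → Measurable Gh → Measurable Gv →
          IntegrableOn (fun x => ∑ i, (Vof (φ' i) (G x i) - Vof (φ' i) (Gh x i)) ^ 2) Ω →
          IntegrableOn (fun x => ∑ i, (Vof (φ' i) (G x i) - Vof (φ' i) (Gv x i)) ^ 2) Ω →
          IntegrableOn (fun x => ∑ i, (A i (G x i) - A i (Gh x i)) * (Gh x i - Gv x i)) Ω →
          (∫ x in Ω, ∑ i, (A i (G x i) - A i (Gh x i)) * (Gh x i - Gv x i)) = 0 →
          (∫ x in Ω, ∑ i, (Vof (φ' i) (G x i) - Vof (φ' i) (Gh x i)) ^ 2) ≤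
            C'' * ∫ x in Ω, ∑ i, (Vof (φ' i) (G x i) - Vof (φ' i) (Gv x i)) ^ 2 :=
  statement9_general c C D hc hcC
end
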